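/- (Proposition 2.1, rough regime.) Let H ∈ (0,1/2] and ρ ≥ 1/(2H). Then the two-dimensional ρ-variation of the fractional Brownian covariance R on [0,1]² is finite: there exists M < ∞ such that for all partitions 0 = s_0 < s_1 < ⋯ < s_m = 1 and 0 = t_0 < t_1 < ⋯ < t_n = 1 of [0,1], Σ_{i=0}^{m−1} Σ_{j=0}^{n−1} |R(s_{i+1},t_{j+1}) − R(s_{i+1},t_j) − R(s_i,t_{j+1}) + R(s_i,t_j)|^{ρ} ≤ M. -/

import Mathlib

open scoped BigOperators

/-- Fractional Brownian motion covariance kernel with Hurst parameter `H`. -/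
noncomputable def fbmCov (H s t : ℝ) : ℝ :=
  (s ^ (2 * H) + t ^ (2 * H) - |t - s| ^ (2 * H)) / 2

/-!
For `a ≤ b` the rectangular increment of `R` over `[a, b] × [u, v]` is half the increment over
`[u, v]` of `ψ x = |x - a| ^ (2H) - |x - b| ^ (2H)`. As `x ↦ x ^ (2H)` is concave, `ψ` decreases
on `(-∞, a]`, increases on `[a, b]` and decreases on `[b, ∞)`, so its total variation on `[0, 1]`
is at most `4 (b - a) ^ (2H)`. Thus a row of increments has `1`-variation at most
`2 (b - a) ^ (2H)`, and by superadditivity of `x ↦ x ^ ρ` its `ρ`-th power sum is at most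
`2 ^ ρ (b - a) ^ (2Hρ) ≤ 2 ^ ρ (b - a)`. Summing over the rows gives the bound `2 ^ ρ`.
-/

open Real Set Finset

theorem Fin.sum_succ_sub_castSucc {M : Type*} [AddCommGroup M] :
    ∀ {n : ℕ} (f : Fin (n + 1) → M),
      ∑ j : Fin n, (f j.succ - f j.castSucc) = f (Fin.last n) - f 0
  | 0, f => by simp
  | n + 1, f => by
    have ih := Fin.sum_succ_sub_castSucc (f ∘ Fin.castSucc)
    simp only [Function.comp_apply] at ih
    rw [Fin.sum_univ_castSucc]
    simp only [Fin.succ_castSucc, ih]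
    simp

theorem sum_rpow_le_rpow_sum {ι : Type*} {ρ : ℝ} (hρ : 1 ≤ ρ) (s : Finset ι) {f : ι → ℝ}
    (hf : ∀ i ∈ s, 0 ≤ f i) : ∑ i ∈ s, f i ^ ρ ≤ (∑ i ∈ s, f i) ^ ρ := by
  induction s using Finset.cons_induction with
  | empty => simp [zero_rpow (one_pos.trans_le hρ).ne']
  | cons a s ha ih =>
    rw [sum_cons, sum_cons] at *
    have hs : ∀ i ∈ s, 0 ≤ f i := fun i hi => hf i (mem_cons_of_mem hi)
    calc f a ^ ρ + ∑ i ∈ s, f i ^ ρ ≤ f a ^ ρ + (∑ i ∈ s, f i) ^ ρ := by gcongr; exact ih hs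
      _ ≤ _ := add_rpow_le_rpow_add (hf a (mem_cons_self a s)) (sum_nonneg hs) hρ

theorem sum_sum_rpow_le_of_sum_le {ι κ : Type*} (s : Finset ι) (u : Finset κ)
    {x : ι → κ → ℝ} {δ : ι → ℝ} {C p ρ : ℝ} (hx : ∀ i ∈ s, ∀ j ∈ u, 0 ≤ x i j)
    (hδ₀ : ∀ i ∈ s, 0 ≤ δ i) (hδ₁ : ∀ i ∈ s, δ i ≤ 1) (hC : 0 ≤ C) (hρ : 1 ≤ ρ)
    (hpρ : 1 ≤ p * ρ) (hrow : ∀ i ∈ s, ∑ j ∈ u, x i j ≤ C * δ i ^ p) :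
    ∑ i ∈ s, ∑ j ∈ u, x i j ^ ρ ≤ C ^ ρ * ∑ i ∈ s, δ i := by
  rw [mul_sum]
  refine sum_le_sum fun i hi => ?_
  calc ∑ j ∈ u, x i j ^ ρ ≤ (∑ j ∈ u, x i j) ^ ρ := sum_rpow_le_rpow_sum hρ u (hx i hi)
    _ ≤ (C * δ i ^ p) ^ ρ := by gcongr; exacts [sum_nonneg (hx i hi), hrow i hi]
    _ = C ^ ρ * δ i ^ (p * ρ) := by
      rw [mul_rpow hC (rpow_nonneg (hδ₀ i hi) p), ← rpow_mul (hδ₀ i hi)]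
    _ ≤ C ^ ρ * δ i := by gcongr; exact rpow_le_self_of_le_one (hδ₀ i hi) (hδ₁ i hi) hpρ

theorem ConcaveOn.add_sub_le_add_sub {s : Set ℝ} {f : ℝ → ℝ} (hf : ConcaveOn ℝ s f)
    {x y d : ℝ} (hx : x ∈ s) (hyd : y + d ∈ s) (hxy : x ≤ y) (hd : 0 ≤ d) :
    f (y + d) - f y ≤ f (x + d) - f x := by
  rcases hd.eq_or_lt with rfl | hd
  · simp
  rcases hxy.eq_or_lt with rfl | hxy
  · rfl
  have hxd : x + d ∈ s := hf.1.ordConnected.out hx hyd ⟨by linarith, by linarith⟩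
  have hy : y ∈ s := hf.1.ordConnected.out hx hyd ⟨by linarith, by linarith⟩
  have h₁ : slope f x (y + d) ≤ slope f x (x + d) :=
    hf.slope_anti hx ⟨hxd, (by linarith : x < x + d).ne'⟩ ⟨hyd, (by linarith : x < y + d).ne'⟩
      (by linarith)
  have h₂ : slope f (y + d) y ≤ slope f (y + d) x :=
    hf.slope_anti hyd ⟨hx, (by linarith : x < y + d).ne⟩ ⟨hy, (by linarith : y < y + d).ne⟩
      hxy.le
  rw [slope_comm f (y + d) y, slope_comm f (y + d) x] at h₂
  have h := h₂.trans h₁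
  simp only [slope_def_field, add_sub_cancel_left] at h
  exact (div_le_div_iff_of_pos_right hd).1 h

theorem sum_abs_sub_le_sub_of_abs_sub_le {f g : ℝ → ℝ}
    (hfg : ∀ ⦃x y⦄, x ≤ y → |f y - f x| ≤ g y - g x) {n : ℕ} {t : Fin (n + 1) → ℝ}
    (ht : Monotone t) :
    ∑ j : Fin n, |f (t j.succ) - f (t j.castSucc)| ≤ g (t (Fin.last n)) - g (t 0) :=
  calc ∑ j : Fin n, |f (t j.succ) - f (t j.castSucc)|
      ≤ ∑ j : Fin n, (g (t j.succ) - g (t j.castSucc)) :=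
        sum_le_sum fun _ _ => hfg (ht Fin.castSucc_lt_succ.le)
    _ = g (t (Fin.last n)) - g (t 0) := Fin.sum_succ_sub_castSucc (g ∘ t)

section DownUpDown

variable {f : ℝ → ℝ} {a b : ℝ}

/-- If `f` decreases on `(-∞, a]`, increases on `[a, b]` and decreases on `[b, ∞)`, then
`downUpDownVar f a b y - downUpDownVar f a b x` is the total variation of `f` on `[x, y]`. -/
noncomputable def downUpDownVar (f : ℝ → ℝ) (a b x : ℝ) : ℝ :=
  f (min (max x a) b) - f (min x a) - f (max x b)

theorem apply_min_add_apply_clamp_add_apply_max (f : ℝ → ℝ) (hab : a ≤ b) (x : ℝ) :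
    f (min x a) + f (min (max x a) b) + f (max x b) = f x + f a + f b := by
  rcases le_total x a with hxa | hax
  · rw [min_eq_left hxa, max_eq_right hxa, min_eq_left hab, max_eq_right (hxa.trans hab)]
  rcases le_total x b with hxb | hbx
  · rw [min_eq_right hax, max_eq_left hax, min_eq_left hxb, max_eq_right hxb]
    ring
  · rw [min_eq_right hax, max_eq_left hax, min_eq_right hbx, max_eq_left hbx]
    ring

theorem abs_sub_le_downUpDownVar_sub (hab : a ≤ b) (hdown₁ : AntitoneOn f (Iic a))
    (hup : MonotoneOn f (Icc a b)) (hdown₂ : AntitoneOn f (Ici b)) {x y : ℝ} (hxy : x ≤ y) :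
    |f y - f x| ≤ downUpDownVar f a b y - downUpDownVar f a b x := by
  have h₁ : f (min y a) ≤ f (min x a) :=
    hdown₁ (min_le_right x a) (min_le_right y a) (min_le_min_right a hxy)
  have h₂ : f (min (max x a) b) ≤ f (min (max y a) b) :=
    hup ⟨le_min (le_max_right x a) hab, min_le_right _ _⟩
      ⟨le_min (le_max_right y a) hab, min_le_right _ _⟩
      (min_le_min_right b (max_le_max_right a hxy))
  have h₃ : f (max y b) ≤ f (max x b) :=
    hdown₂ (le_max_right x b) (le_max_right y b) (max_le_max_right b hxy)
  have hx := apply_min_add_apply_clamp_add_apply_max f hab x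
  have hy := apply_min_add_apply_clamp_add_apply_max f hab y
  rw [abs_le, downUpDownVar, downUpDownVar]
  constructor <;> linarith

theorem downUpDownVar_one_sub_zero (h0a : 0 ≤ a) (hab : a ≤ b) (hb1 : b ≤ 1) :
    downUpDownVar f a b 1 - downUpDownVar f a b 0 = 2 * (f b - f a) + f 0 - f 1 := by
  simp only [downUpDownVar, max_eq_right h0a, min_eq_left h0a, min_eq_left hab,
    max_eq_left (hab.trans hb1), min_eq_right hb1, min_eq_right (hab.trans hb1),
    max_eq_right (h0a.trans hab), max_eq_left hb1]
  ring

end DownUpDown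

section DistPowSub

variable {p a b : ℝ}

noncomputable def distPowSub (p a b x : ℝ) : ℝ := |x - a| ^ p - |x - b| ^ p

theorem rpow_add_sub_rpow_le (hp₀ : 0 ≤ p) (hp₁ : p ≤ 1) {x y d : ℝ} (hx : 0 ≤ x)
    (hxy : x ≤ y) (hd : 0 ≤ d) : (y + d) ^ p - y ^ p ≤ (x + d) ^ p - x ^ p :=
  (concaveOn_rpow hp₀ hp₁).add_sub_le_add_sub hx (by rw [Set.mem_Ici]; linarith) hxy hd

theorem distPowSub_antitoneOn_Iic (hp₀ : 0 ≤ p) (hp₁ : p ≤ 1) (hab : a ≤ b) :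
    AntitoneOn (distPowSub p a b) (Iic a) := by
  intro x (hx : x ≤ a) y (hy : y ≤ a) hxy
  have key := rpow_add_sub_rpow_le hp₀ hp₁ (sub_nonneg.2 hy) (sub_le_sub_right hab y)
    (sub_nonneg.2 hxy)
  simp only [sub_add_sub_cancel] at key
  simp only [distPowSub, abs_sub_comm _ a, abs_sub_comm _ b,
    abs_of_nonneg (sub_nonneg.2 hx), abs_of_nonneg (sub_nonneg.2 (hx.trans hab)),
    abs_of_nonneg (sub_nonneg.2 hy), abs_of_nonneg (sub_nonneg.2 (hy.trans hab))]
  linarith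

theorem distPowSub_monotoneOn_Icc (hp₀ : 0 ≤ p) : MonotoneOn (distPowSub p a b) (Icc a b) := by
  intro x hx y hy hxy
  simp only [distPowSub, abs_sub_comm _ b, abs_of_nonneg (sub_nonneg.2 hx.1),
    abs_of_nonneg (sub_nonneg.2 hy.1), abs_of_nonneg (sub_nonneg.2 hx.2),
    abs_of_nonneg (sub_nonneg.2 hy.2)]
  gcongr <;> linarith [hx.1, hy.2]

theorem distPowSub_antitoneOn_Ici (hp₀ : 0 ≤ p) (hp₁ : p ≤ 1) (hab : a ≤ b) :
    AntitoneOn (distPowSub p a b) (Ici b) := by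
  intro x (hx : b ≤ x) y (hy : b ≤ y) hxy
  have key := rpow_add_sub_rpow_le hp₀ hp₁ (sub_nonneg.2 hx) (sub_le_sub_left hab x)
    (sub_nonneg.2 hxy)
  simp only [sub_add_sub_cancel'] at key
  simp only [distPowSub, abs_of_nonneg (sub_nonneg.2 hx), abs_of_nonneg (sub_nonneg.2 hy),
    abs_of_nonneg (sub_nonneg.2 (hab.trans hx)), abs_of_nonneg (sub_nonneg.2 (hab.trans hy))]
  linarith

theorem sum_abs_distPowSub_sub_le (hp₀ : 0 < p) (hp₁ : p ≤ 1) (h0a : 0 ≤ a) (hab : a ≤ b)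
    (hb1 : b ≤ 1) {n : ℕ} {t : Fin (n + 1) → ℝ} (ht : Monotone t) (ht0 : t 0 = 0)
    (ht1 : t (Fin.last n) = 1) :
    ∑ j : Fin n, |distPowSub p a b (t j.succ) - distPowSub p a b (t j.castSucc)|
      ≤ 4 * (b - a) ^ p := by
  have hvar : ∀ ⦃x y : ℝ⦄, x ≤ y → |distPowSub p a b y - distPowSub p a b x| ≤
      downUpDownVar (distPowSub p a b) a b y - downUpDownVar (distPowSub p a b) a b x :=
    fun _ _ => abs_sub_le_downUpDownVar_sub hab (distPowSub_antitoneOn_Iic hp₀.le hp₁ hab)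
      (distPowSub_monotoneOn_Icc hp₀.le) (distPowSub_antitoneOn_Ici hp₀.le hp₁ hab)
  have ha : distPowSub p a b a = -(b - a) ^ p := by
    simp [distPowSub, zero_rpow hp₀.ne', abs_sub_comm a b, abs_of_nonneg (sub_nonneg.2 hab)]
  have hb : distPowSub p a b b = (b - a) ^ p := by
    simp [distPowSub, zero_rpow hp₀.ne', abs_of_nonneg (sub_nonneg.2 hab)]
  have h0 : distPowSub p a b 0 ≤ 0 := by
    simp only [distPowSub, zero_sub, abs_neg, abs_of_nonneg h0a,
      abs_of_nonneg (h0a.trans hab), sub_nonpos]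
    gcongr
  have h1 : 0 ≤ distPowSub p a b 1 := by
    simp only [distPowSub, abs_of_nonneg (sub_nonneg.2 hb1),
      abs_of_nonneg (sub_nonneg.2 (hab.trans hb1)), sub_nonneg]
    gcongr
  calc _ ≤ _ := sum_abs_sub_le_sub_of_abs_sub_le hvar ht
    _ = 2 * (distPowSub p a b b - distPowSub p a b a) + distPowSub p a b 0
          - distPowSub p a b 1 := by rw [ht0, ht1, downUpDownVar_one_sub_zero h0a hab hb1]
    _ ≤ 4 * (b - a) ^ p := by rw [ha, hb]; linarith

end DistPowSub

def rectInc (R : ℝ → ℝ → ℝ) (a b u v : ℝ) : ℝ := R b v - R b u - R a v + R a u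

theorem rectInc_fbmCov (H a b u v : ℝ) :
    rectInc (fbmCov H) a b u v = (distPowSub (2 * H) a b v - distPowSub (2 * H) a b u) / 2 := by
  simp only [rectInc, fbmCov, distPowSub]
  ring

theorem sum_abs_rectInc_fbmCov_le {H a b : ℝ} (hH0 : 0 < H) (hH : H ≤ 1 / 2) (h0a : 0 ≤ a)
    (hab : a ≤ b) (hb1 : b ≤ 1) {n : ℕ} {t : Fin (n + 1) → ℝ} (ht : Monotone t)
    (ht0 : t 0 = 0) (ht1 : t (Fin.last n) = 1) :
    ∑ j : Fin n, |rectInc (fbmCov H) a b (t j.castSucc) (t j.succ)| ≤ 2 * (b - a) ^ (2 * H) := by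
  have hrow := sum_abs_distPowSub_sub_le (p := 2 * H) (by positivity) (by linarith)
    h0a hab hb1 ht ht0 ht1
  simp only [rectInc_fbmCov, abs_div, abs_two, ← sum_div]
  linarith

/-- (Proposition 2.1, rough regime.) For `H ∈ (0,1/2]` and `ρ ≥ 1/(2H)`, the
two-dimensional `ρ`-variation of the fBm covariance on `[0,1]²` is finite: there is
`M < ∞` bounding `∑ᵢ∑ⱼ |R(s_{i+1},t_{j+1}) − R(s_{i+1},t_j) − R(s_i,t_{j+1}) + R(s_i,t_j)|^ρ`
over all pairs of partitions `0 = s₀ < ⋯ < s_m = 1`, `0 = t₀ < ⋯ < t_n = 1`. -/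
theorem fbmCov_2d_rho_variation_finite (H : ℝ) (hH0 : 0 < H) (hH : H ≤ 1 / 2)
    (ρ : ℝ) (hρ : 1 / (2 * H) ≤ ρ) :
    ∃ M : ℝ, ∀ (m n : ℕ) (s : Fin (m + 1) → ℝ) (t : Fin (n + 1) → ℝ),
      StrictMono s → s 0 = 0 → s (Fin.last m) = 1 →
      StrictMono t → t 0 = 0 → t (Fin.last n) = 1 →
      ∑ i : Fin m, ∑ j : Fin n,
          |fbmCov H (s i.succ) (t j.succ) - fbmCov H (s i.succ) (t j.castSucc)
            - fbmCov H (s i.castSucc) (t j.succ)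
            + fbmCov H (s i.castSucc) (t j.castSucc)| ^ ρ
        ≤ M := by
  have hp₀ : 0 < 2 * H := by positivity
  have hρ₁ : 1 ≤ ρ := (one_le_one_div hp₀ (by linarith)).trans hρ
  have hpρ : 1 ≤ 2 * H * ρ := by rw [mul_comm]; exact (div_le_iff₀ hp₀).1 hρ
  refine ⟨2 ^ ρ, fun m n s t hs hs0 hs1 ht ht0 ht1 => ?_⟩
  have hs_nonneg (i : Fin (m + 1)) : 0 ≤ s i := hs0 ▸ hs.monotone (Fin.zero_le i)
  have hs_le_one (i : Fin (m + 1)) : s i ≤ 1 := hs1 ▸ hs.monotone (Fin.le_last i)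
  have hs_step (i : Fin m) : s i.castSucc ≤ s i.succ := hs.monotone Fin.castSucc_lt_succ.le
  have hrow (i : Fin m) : ∑ j : Fin n,
      |rectInc (fbmCov H) (s i.castSucc) (s i.succ) (t j.castSucc) (t j.succ)|
        ≤ 2 * (s i.succ - s i.castSucc) ^ (2 * H) :=
    sum_abs_rectInc_fbmCov_le hH0 hH (hs_nonneg _) (hs_step i) (hs_le_one _) ht.monotone ht0 ht1
  calc ∑ i : Fin m, ∑ j : Fin n,
        |rectInc (fbmCov H) (s i.castSucc) (s i.succ) (t j.castSucc) (t j.succ)| ^ ρ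
      ≤ 2 ^ ρ * ∑ i : Fin m, (s i.succ - s i.castSucc) :=
        sum_sum_rpow_le_of_sum_le _ _ (fun _ _ _ _ => abs_nonneg _)
          (fun i _ => sub_nonneg.2 (hs_step i))
          (fun i _ => by linarith [hs_le_one i.succ, hs_nonneg i.castSucc]) zero_le_two hρ₁ hpρ
          (fun i _ => hrow i)
    _ = 2 ^ ρ := by rw [Fin.sum_succ_sub_castSucc s, hs0, hs1, sub_zero, mul_one]
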